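/- The second cumulant (variance) of log|det X_n| for the GUE satisfies Γ_2(n,2) = (1/2)·log(2⌊n/2⌋) + (1/2)·(γ + log 2 + 1) + O(1/n) as n → ∞, where γ is the Euler–Mascheroni constant. -/

import Mathlib

open Filter

/-- The moment generating function of the log-determinant of an `n × n` GUE matrix:
`M_{n,2}(s) = 2^{ns/2} · ∏_{m=1}^{n} Γ(s/2 + 1/2 + ⌊m/2⌋)/Γ(1/2 + ⌊m/2⌋)`. -/
noncomputable def gueMgf (n : ℕ) (s : ℝ) : ℝ :=
  (2 : ℝ) ^ ((n : ℝ) * s / 2) *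
    ∏ m ∈ Finset.Icc 1 n,
      Real.Gamma (s / 2 + 1/2 + (m / 2 : ℕ)) / Real.Gamma (1/2 + (m / 2 : ℕ))

/-- The `j`-th cumulant of the log-determinant of an `n × n` GUE matrix. -/
noncomputable def gueCumulant (j n : ℕ) : ℝ :=
  iteratedDeriv j (fun s => Real.log (gueMgf n s)) 0

/-!
For `s > -1`, `log M_{n,2}(s) = (ns/2) log 2 + ∑ₘ (log Γ(s/2 + cₘ) - log Γ(cₘ))` with
`cₘ = 1/2 + ⌊m/2⌋`, so `Γ_2(n,2) = ¼ ∑ₘ ψ'(cₘ)`. Differentiating Euler's limit formula for `log Γ`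
term by term twice gives `ψ'(x) = ∑ⱼ (x + j)⁻²`. Every value `⌊m/2⌋ = k` occurs twice, so the sum
splits into two partial sums `∑_{k<N} ψ'(1/2 + k)` with `N ≈ n/2`. The functional equation
`ψ'(x) = x⁻² + ψ'(x + 1)` rewrites such a partial sum as
`(N - 1/2) ψ'(N + 1/2) + ψ'(1/2)/2 + 2 H_{2N} - H_N`, and the asymptotics follow from
`1/x ≤ ψ'(x) ≤ 1/(x - 1/2)` and `H_m = log m + γ + O(1/m)`.
-/

open Real Topology Set

noncomputable def trigammaSeries (x : ℝ) : ℝ := ∑' j : ℕ, 1 / (x + j) ^ 2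

lemma summable_one_div_add_sq {x : ℝ} (hx : 0 < x) :
    Summable fun j : ℕ => 1 / (x + j) ^ 2 := by
  refine ((Real.summable_one_div_nat_add_rpow x 2).2 one_lt_two).congr fun j => ?_
  rw [abs_of_pos (by positivity), add_comm, Real.rpow_two]

lemma trigammaSeries_eq_one_div_sq_add {x : ℝ} (hx : 0 < x) :
    trigammaSeries x = 1 / x ^ 2 + trigammaSeries (x + 1) := by
  rw [trigammaSeries, (summable_one_div_add_sq hx).tsum_eq_zero_add, trigammaSeries]
  push_cast
  simp only [add_zero, add_assoc, add_comm (1 : ℝ)]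

lemma hasSum_one_div_sub_one_div_add_one {x : ℝ} (hx : 0 < x) :
    HasSum (fun j : ℕ => 1 / (x + j) - 1 / (x + j + 1)) (1 / x) := by
  have hnonneg (j : ℕ) : 0 ≤ 1 / (x + j) - 1 / (x + j + 1) :=
    sub_nonneg.2 (one_div_le_one_div_of_le (by positivity) (by linarith))
  rw [hasSum_iff_tendsto_nat_of_nonneg hnonneg]
  have hpartial (N : ℕ) :
      ∑ j ∈ Finset.range N, (1 / (x + j) - 1 / (x + j + 1)) = 1 / x - 1 / (x + N) := by
    simpa [add_assoc] using Finset.sum_range_sub' (fun j : ℕ => 1 / (x + j)) N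
  simp only [hpartial]
  simpa using (tendsto_const_nhds (x := 1 / x)).sub (tendsto_const_nhds (x := (1 : ℝ)).div_atTop
    (tendsto_atTop_add_const_left _ x tendsto_natCast_atTop_atTop))

lemma one_div_le_trigammaSeries {x : ℝ} (hx : 0 < x) : 1 / x ≤ trigammaSeries x := by
  refine hasSum_le (fun j => ?_) (hasSum_one_div_sub_one_div_add_one hx)
    (summable_one_div_add_sq hx).hasSum
  have hj : 0 < x + j := by positivity
  rw [div_sub_div _ _ hj.ne' (by positivity), div_le_div_iff₀ (by positivity) (by positivity)]
  nlinarith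

lemma trigammaSeries_le {x : ℝ} (hx : 1 / 2 < x) : trigammaSeries x ≤ 1 / (x - 1 / 2) := by
  refine hasSum_le (fun j => ?_) (summable_one_div_add_sq (by linarith)).hasSum
    (hasSum_one_div_sub_one_div_add_one (by linarith))
  have hj : 0 < x - 1 / 2 + j := by positivity
  rw [div_sub_div _ _ hj.ne' (by positivity), div_le_div_iff₀ (by positivity) (by positivity)]
  nlinarith

lemma sum_range_trigammaSeries {x : ℝ} (hx : 0 < x) (N : ℕ) :
    ∑ k ∈ Finset.range N, trigammaSeries (x + k)
      = (N + x - 1) * trigammaSeries (x + N) + (1 - x) * trigammaSeries x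
        + ∑ k ∈ Finset.range N, 1 / (x + k) := by
  induction N with
  | zero => simp; ring
  | succ N ih =>
    have hxN : 0 < x + N := by positivity
    rw [Finset.sum_range_succ, ih, Finset.sum_range_succ]
    simp only [Nat.cast_succ, ← add_assoc]
    rw [trigammaSeries_eq_one_div_sq_add hxN]
    field_simp
    ring

noncomputable def digammaSeries (x : ℝ) : ℝ :=
  -eulerMascheroniConstant + ∑' m : ℕ, (1 / ((m : ℝ) + 1) - 1 / (x + m))

lemma abs_one_div_add_one_sub_one_div_add_le {a y : ℝ} (ha : 0 < a) (ha1 : a ≤ 1) (hay : a ≤ y)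
    (m : ℕ) : |1 / ((m : ℝ) + 1) - 1 / (y + m)| ≤ |y - 1| * (1 / (a + m) ^ 2) := by
  have hm : 0 < (m : ℝ) + 1 := by positivity
  have hym : 0 < y + m := by linarith [(Nat.cast_nonneg m : (0 : ℝ) ≤ m)]
  rw [div_sub_div _ _ hm.ne' hym.ne', abs_div, abs_of_pos (mul_pos hm hym), ← div_eq_mul_one_div]
  have hden : (a + m) ^ 2 ≤ ((m : ℝ) + 1) * (y + m) := by
    rw [sq]; exact mul_le_mul (by linarith) (by linarith) (by positivity) hm.le
  calc |1 * (y + m) - ((m : ℝ) + 1) * 1| / (((m : ℝ) + 1) * (y + m))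
      = |y - 1| / (((m : ℝ) + 1) * (y + m)) := by ring_nf
    _ ≤ |y - 1| / (a + m) ^ 2 := by gcongr

lemma summable_one_div_add_one_sub_one_div_add {x : ℝ} (hx : 0 < x) :
    Summable fun m : ℕ => 1 / ((m : ℝ) + 1) - 1 / (x + m) :=
  .of_norm_bounded ((summable_one_div_add_sq (lt_min hx one_pos)).mul_left |x - 1|)
    (abs_one_div_add_one_sub_one_div_add_le (lt_min hx one_pos) (min_le_right _ _)
      (min_le_left _ _))

lemma hasDerivAt_digammaSeries {x : ℝ} (hx : 0 < x) :
    HasDerivAt digammaSeries (trigammaSeries x) x := by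
  have hterm (m : ℕ) (y : ℝ) (hy : y ∈ Ioi (x / 2)) :
      HasDerivAt (fun z => 1 / ((m : ℝ) + 1) - 1 / (z + m)) (1 / (y + m) ^ 2) y := by
    have hym : y + m ≠ 0 := by linarith [hy.out, half_pos hx, (Nat.cast_nonneg m : (0 : ℝ) ≤ m)]
    simpa [one_div, neg_div] using
      (((hasDerivAt_id y).add_const (m : ℝ)).inv hym).const_sub (1 / ((m : ℝ) + 1))
  have hbound (m : ℕ) (y : ℝ) (hy : y ∈ Ioi (x / 2)) :
      ‖1 / (y + m) ^ 2‖ ≤ 1 / (x / 2 + m) ^ 2 := by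
    have hy0 : 0 < y := (half_pos hx).trans hy
    rw [Real.norm_of_nonneg (by positivity)]
    gcongr
    exact hy.out.le
  exact (hasDerivAt_tsum_of_isPreconnected (summable_one_div_add_sq (half_pos hx)) isOpen_Ioi
    isPreconnected_Ioi hterm hbound (half_lt_self hx) (summable_one_div_add_one_sub_one_div_add hx)
    (half_lt_self hx)).const_add _

lemma hasDerivAt_logGammaSeq (N : ℕ) {x : ℝ} (hx : 0 < x) :
    HasDerivAt (fun y => BohrMollerup.logGammaSeq y N)
      (log N - ∑ m ∈ Finset.range (N + 1), 1 / (x + m)) x := by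
  have hlog : HasDerivAt (fun y => ∑ m ∈ Finset.range (N + 1), log (y + m))
      (∑ m ∈ Finset.range (N + 1), 1 / (x + m)) x :=
    HasDerivAt.fun_sum fun m _ => by
      simpa [one_div] using ((hasDerivAt_id x).add_const (m : ℝ)).log (by positivity)
  exact ((hasDerivAt_mul_const (log N)).add_const _).fun_sub hlog

lemma tendstoUniformlyOn_deriv_logGammaSeq {a b : ℝ} (ha : 0 < a) (ha1 : a ≤ 1) :
    TendstoUniformlyOn (fun (N : ℕ) (y : ℝ) => log N - ∑ m ∈ Finset.range (N + 1), 1 / (y + m))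
      digammaSeries atTop (Ioo a b) := by
  have hconst : Tendsto (fun N : ℕ => log N - (harmonic (N + 1) : ℝ)) atTop
      (𝓝 (-eulerMascheroniConstant)) := by
    have h := tendsto_harmonic_sub_log.neg.sub tendsto_one_div_add_atTop_nhds_zero_nat
    rw [sub_zero] at h
    refine h.congr fun N => ?_
    push_cast [harmonic_succ]
    ring
  have hseries : TendstoUniformlyOn
      (fun (N : ℕ) y => ∑ m ∈ Finset.range (N + 1), (1 / ((m : ℝ) + 1) - 1 / (y + m)))
      (fun y => ∑' m : ℕ, (1 / ((m : ℝ) + 1) - 1 / (y + m))) atTop (Ioo a b) :=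
    fun u hu => (tendsto_add_atTop_nat 1).eventually <|
      tendstoUniformlyOn_tsum_nat ((summable_one_div_add_sq ha).mul_left (b + 1))
        (fun m y hy => (abs_one_div_add_one_sub_one_div_add_le ha ha1 hy.1.le m).trans <| by
          gcongr
          exact abs_sub_le_iff.2 ⟨by linarith [hy.1, hy.2], by linarith [hy.1, hy.2]⟩) u hu
  refine ((hconst.tendstoUniformlyOn_const _).add hseries).congr <|
    Eventually.of_forall fun N y _ => ?_
  simp only [Pi.add_apply, Finset.sum_sub_distrib, harmonic, one_div]
  push_cast
  ring

lemma hasDerivAt_log_Gamma {x : ℝ} (hx : 0 < x) :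
    HasDerivAt (fun y => log (Gamma y)) (digammaSeries x) x := by
  have ha : 0 < min x 1 / 2 := by positivity
  have hax : min x 1 / 2 < x := by linarith [min_le_left x 1]
  exact hasDerivAt_of_tendstoUniformlyOn isOpen_Ioo
    (tendstoUniformlyOn_deriv_logGammaSeq (b := x + 1) ha (by linarith [min_le_right x 1]))
    (Eventually.of_forall fun N y hy => hasDerivAt_logGammaSeq N (ha.trans hy.1))
    (fun y hy => BohrMollerup.tendsto_log_gamma (ha.trans hy.1)) ⟨hax, by linarith⟩

lemma log_sub_log_mem_Icc {x y : ℝ} (hx : 0 < x) (hxy : x ≤ y) (hyx : y ≤ x + 1) :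
    log y - log x ∈ Icc 0 (1 / x) := by
  refine ⟨sub_nonneg.2 (log_le_log hx hxy), ?_⟩
  rw [← log_div (by linarith) hx.ne']
  calc log (y / x) ≤ y / x - 1 := log_le_sub_one_of_pos (div_pos (by linarith) hx)
    _ ≤ 1 / x := by rw [div_sub_one hx.ne']; gcongr; linarith

lemma harmonic_sub_log_sub_eulerMascheroniConstant_mem_Icc {n : ℕ} (hn : n ≠ 0) :
    (harmonic n : ℝ) - log n - eulerMascheroniConstant ∈ Icc 0 (1 / (n : ℝ)) := by
  have hlower := eulerMascheroniConstant_lt_eulerMascheroniSeq' n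
  have hupper := eulerMascheroniSeq_lt_eulerMascheroniConstant n
  rw [eulerMascheroniSeq', if_neg hn] at hlower
  rw [eulerMascheroniSeq] at hupper
  have hlog := (log_sub_log_mem_Icc (x := n) (y := n + 1) (Nat.cast_pos.2 (Nat.pos_of_ne_zero hn))
    (by linarith) le_rfl).2
  exact ⟨by linarith, by linarith⟩

lemma sum_range_one_div_half_add (N : ℕ) :
    ∑ k ∈ Finset.range N, 1 / (1 / 2 + (k : ℝ)) = 2 * harmonic (2 * N) - harmonic N := by
  induction N with
  | zero => simp
  | succ N ih =>
    rw [Finset.sum_range_succ, ih, mul_add_one, harmonic_succ, harmonic_succ, harmonic_succ]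
    push_cast
    field_simp
    ring

lemma abs_sum_range_trigammaSeries_half_add_sub_le {N : ℕ} (hN : N ≠ 0) :
    |∑ k ∈ Finset.range N, trigammaSeries (1 / 2 + k) - trigammaSeries (1 / 2) / 2
      - (log N + 1 + 2 * log 2 + eulerMascheroniConstant)| ≤ 2 / N := by
  have hN1 : (1 : ℝ) ≤ N := by exact_mod_cast Nat.one_le_iff_ne_zero.2 hN
  have htri_lower := one_div_le_trigammaSeries (x := 1 / 2 + N) (by positivity)
  have htri_upper := trigammaSeries_le (x := 1 / 2 + N) (by linarith)
  have hH := harmonic_sub_log_sub_eulerMascheroniConstant_mem_Icc hN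
  have hH2 := harmonic_sub_log_sub_eulerMascheroniConstant_mem_Icc (n := 2 * N) (by positivity)
  have hlog2 : log (2 * N) = log 2 + log N := log_mul two_ne_zero (by positivity)
  push_cast [hlog2] at hH2
  have hhalf : 1 / (2 * (N : ℝ)) = 1 / N / 2 := by ring
  have htwo : 2 / (N : ℝ) = 2 * (1 / N) := by ring
  rw [sum_range_trigammaSeries (by norm_num), sum_range_one_div_half_add,
    show (N : ℝ) + 1 / 2 - 1 = N - 1 / 2 by ring]
  set t := trigammaSeries (1 / 2 + N)
  have hlower : 1 - 1 / (N : ℝ) ≤ (N - 1 / 2) * t :=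
    calc 1 - 1 / (N : ℝ) ≤ 1 - 1 / (1 / 2 + N) := by gcongr; linarith
      _ = (N - 1 / 2) * (1 / (1 / 2 + N)) := by field_simp; ring
      _ ≤ (N - 1 / 2) * t := by gcongr; linarith
  have hupper : (N - 1 / 2) * t ≤ 1 :=
    calc (N - 1 / 2) * t ≤ (N - 1 / 2) * (1 / N) :=
        mul_le_mul_of_nonneg_left (by simpa using htri_upper) (by linarith)
      _ ≤ 1 := by rw [mul_one_div, div_le_one (by linarith)]; linarith
  rw [abs_le]
  constructor <;> linarith [hH.1, hH.2, hH2.1, hH2.2]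

lemma sum_Icc_div_two {M : Type*} [AddCommGroup M] (f : ℕ → M) (n : ℕ) :
    ∑ m ∈ Finset.Icc 1 n, f (m / 2)
      = ∑ k ∈ Finset.range (n / 2 + 1), f k + ∑ k ∈ Finset.range ((n + 1) / 2), f k - f 0 := by
  induction n with
  | zero => simp
  | succ n ih =>
    rw [Finset.sum_Icc_succ_top (by omega), ih, show (n + 1 + 1) / 2 = n / 2 + 1 by omega,
      Finset.sum_range_succ _ ((n + 1) / 2)]
    abel

lemma log_gueMgf_eq {n : ℕ} {s : ℝ} (hs : -1 < s) :
    log (gueMgf n s) = n * s / 2 * log 2 + ∑ m ∈ Finset.Icc 1 n,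
      (log (Gamma (s / 2 + 1 / 2 + (m / 2 : ℕ))) - log (Gamma (1 / 2 + (m / 2 : ℕ)))) := by
  have hnum (m : ℕ) : 0 < Gamma (s / 2 + 1 / 2 + (m / 2 : ℕ)) :=
    Gamma_pos_of_pos (by have := (m / 2 : ℕ).cast_nonneg (α := ℝ); linarith)
  have hden (m : ℕ) : 0 < Gamma (1 / 2 + (m / 2 : ℕ)) := Gamma_pos_of_pos (by positivity)
  have hratio (m : ℕ) := div_pos (hnum m) (hden m)
  rw [gueMgf, log_mul (by positivity) (Finset.prod_pos fun m _ => hratio m).ne', log_rpow two_pos,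
    log_prod fun m _ => (hratio m).ne']
  congr 1
  exact Finset.sum_congr rfl fun m _ => log_div (hnum m).ne' (hden m).ne'

lemma hasDerivAt_log_gueMgf (n : ℕ) {s : ℝ} (hs : -1 < s) :
    HasDerivAt (fun t => log (gueMgf n t))
      (n / 2 * log 2 + ∑ m ∈ Finset.Icc 1 n, digammaSeries (s / 2 + 1 / 2 + (m / 2 : ℕ)) / 2)
      s := by
  have hterm (m : ℕ) : HasDerivAt (fun t => log (Gamma (t / 2 + 1 / 2 + (m / 2 : ℕ))))
      (digammaSeries (s / 2 + 1 / 2 + (m / 2 : ℕ)) / 2) s := by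
    have harg : HasDerivAt (fun t : ℝ => t / 2 + 1 / 2 + (m / 2 : ℕ)) (1 / 2) s :=
      (((hasDerivAt_id s).div_const 2).add_const _).add_const _
    exact ((hasDerivAt_log_Gamma
      (by have := (m / 2 : ℕ).cast_nonneg (α := ℝ); linarith)).comp s harg).congr_deriv (by ring)
  have hsum := ((hasDerivAt_mul_const ((n : ℝ) / 2 * log 2)).fun_add
    (HasDerivAt.fun_sum fun m (_ : m ∈ Finset.Icc 1 n) => (hterm m).sub_const
      (log (Gamma (1 / 2 + (m / 2 : ℕ))))))
  refine hsum.congr_of_eventuallyEq ?_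
  filter_upwards [eventually_gt_nhds hs] with t ht
  rw [log_gueMgf_eq ht]
  ring

lemma gueCumulant_two_eq (n : ℕ) :
    gueCumulant 2 n = (∑ m ∈ Finset.Icc 1 n, trigammaSeries (1 / 2 + (m / 2 : ℕ))) / 4 := by
  have hderiv : deriv (fun s => log (gueMgf n s)) =ᶠ[𝓝 0] fun s =>
      n / 2 * log 2 + ∑ m ∈ Finset.Icc 1 n, digammaSeries (s / 2 + 1 / 2 + (m / 2 : ℕ)) / 2 := by
    filter_upwards [eventually_gt_nhds neg_one_lt_zero] with s hs
    exact (hasDerivAt_log_gueMgf n hs).deriv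
  have hterm (m : ℕ) : HasDerivAt (fun s => digammaSeries (s / 2 + 1 / 2 + (m / 2 : ℕ)) / 2)
      (trigammaSeries (1 / 2 + (m / 2 : ℕ)) / 4) 0 := by
    have harg : HasDerivAt (fun t : ℝ => t / 2 + 1 / 2 + (m / 2 : ℕ)) (1 / 2) 0 :=
      (((hasDerivAt_id 0).div_const 2).add_const _).add_const _
    have hdigamma := hasDerivAt_digammaSeries (x := 0 / 2 + 1 / 2 + (m / 2 : ℕ)) (by positivity)
    refine ((hdigamma.comp 0 harg).div_const 2).congr_deriv ?_
    norm_num only [zero_div, zero_add]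
    ring
  rw [gueCumulant, iteratedDeriv_succ, iteratedDeriv_one,
    hderiv.deriv_eq, ((hasDerivAt_const _ _).fun_add (HasDerivAt.fun_sum fun m _ => hterm m)).deriv,
    zero_add, Finset.sum_div]

lemma abs_gueCumulant_two_sub_le {n : ℕ} (hn : 2 ≤ n) :
    |gueCumulant 2 n - ((1 / 2) * log (2 * (n / 2 : ℕ))
      + (1 / 2) * (eulerMascheroniConstant + log 2 + 1))| ≤ 3 / 2 / (n / 2 : ℕ) := by
  have hcumulant := gueCumulant_two_eq n
  rw [sum_Icc_div_two (fun k => trigammaSeries (1 / 2 + k)), Nat.cast_zero, add_zero] at hcumulant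
  set K := n / 2
  set N := (n + 1) / 2
  have hK : (1 : ℝ) ≤ K := by exact_mod_cast (show 1 ≤ K by omega)
  have hK₀ : (0 : ℝ) < K := by linarith
  have hKN : (K : ℝ) ≤ N ∧ (N : ℝ) ≤ K + 1 := by constructor <;> norm_cast <;> omega
  have e₁ := abs_le.1 <| abs_sum_range_trigammaSeries_half_add_sub_le (N := K + 1) (by omega)
  have e₂ := abs_le.1 <| abs_sum_range_trigammaSeries_half_add_sub_le (N := N) (by omega)
  have l₁ := log_sub_log_mem_Icc (y := K + 1) hK₀ (by linarith) le_rfl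
  have l₂ := log_sub_log_mem_Icc hK₀ hKN.1 hKN.2
  have hinv₁ : 2 / ((K + 1 : ℕ) : ℝ) ≤ 2 * (1 / K) := by
    rw [← mul_one_div]; gcongr; omega
  have hinv₂ : 2 / (N : ℝ) ≤ 2 * (1 / K) := by
    rw [← mul_one_div]; gcongr; exact_mod_cast hKN.1
  rw [log_mul two_ne_zero hK₀.ne', hcumulant, div_eq_mul_one_div (3 / 2 : ℝ), abs_le]
  push_cast at e₁ hinv₁
  constructor <;> linarith [l₁.1, l₁.2, l₂.1, l₂.2]

theorem gueVariance_asymptotic :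
    (fun n : ℕ => gueCumulant 2 n
        - ((1/2) * Real.log (2 * (n / 2 : ℕ))
            + (1/2) * (Real.eulerMascheroniConstant + Real.log 2 + 1)))
      =O[atTop] (fun n : ℕ => 1 / (n : ℝ)) := by
  refine Asymptotics.IsBigO.of_bound (9 / 2) ?_
  filter_upwards [eventually_ge_atTop 2] with n hn
  have hK : (0 : ℝ) < (n / 2 : ℕ) := by exact_mod_cast (show 0 < n / 2 by omega)
  have hnK : (n : ℝ) ≤ 3 * (n / 2 : ℕ) := by exact_mod_cast (show n ≤ 3 * (n / 2) by omega)
  rw [Real.norm_eq_abs, Real.norm_of_nonneg (by positivity)]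
  calc _ ≤ 3 / 2 / ((n / 2 : ℕ) : ℝ) := abs_gueCumulant_two_sub_le hn
    _ ≤ 9 / 2 * (1 / (n : ℝ)) := by
      rw [div_le_iff₀ hK]
      field_simp
      linarith
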